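/- The capacity of the two-hop half-duplex relay channel with symmetric binary-symmetric links strictly exceeds the conventional relaying rate: for every ε ∈ [0, 1/2), sup over P ∈ [0,1] of min{ (1 − H(ε))·(1 − P), H(ε·(1 − 2P) + P) − H(ε) } > (1 − H(ε))/2. -/

import Mathlib

/-!
At `P = 1/2` the argument of `H` in the second term is `1/2`, so that term is
`H(1/2) - H(ε) = 1 - H(ε)`, twice the conventional rate,
while the first term equals the conventional rate. Moving `P` slightly below `1/2` makes
the first term strictly larger, and by continuity of `H` the second stays above
`(1 - H(ε))/2`.
-/

/-- The binary entropy function (in bits), with the convention `0·log2 0 = 0`. -/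
noncomputable def binH (p : ℝ) : ℝ :=
  -(p * Real.logb 2 p) - (1 - p) * Real.logb 2 (1 - p)

open Filter Set Topology

lemma binH_eq_binEntropy_div_log_two (p : ℝ) : binH p = Real.binEntropy p / Real.log 2 := by
  simp only [binH, Real.binEntropy, Real.logb, Real.log_inv]
  ring

lemma binH_half : binH (1 / 2) = 1 := by
  rw [binH_eq_binEntropy_div_log_two, one_div, Real.binEntropy_two_inv]
  exact div_self (Real.log_pos one_lt_two).ne'

lemma binH_lt_one {p : ℝ} (hp : p ≠ 1 / 2) : binH p < 1 := by
  rw [binH_eq_binEntropy_div_log_two, div_lt_one (Real.log_pos one_lt_two)]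
  exact Real.binEntropy_lt_log_two.2 (by rwa [← one_div])

@[fun_prop]
lemma continuous_binH : Continuous binH := by
  simp only [funext binH_eq_binEntropy_div_log_two]
  fun_prop

lemma exists_mem_Ioo_lt_of_continuousAt {f : ℝ → ℝ} {a x c : ℝ} (hax : a < x)
    (hf : ContinuousAt f x) (hc : c < f x) : ∃ y ∈ Ioo a x, c < f y :=
  (Eventually.and (Ioo_mem_nhdsLT hax)
    (nhdsWithin_le_nhds (hf.eventually (lt_mem_nhds hc)))).exists

/-- for symmetric binary-symmetric links with crossover probability
`ε ∈ [0, 1/2)`, the capacity of the two-hop half-duplex relay channel,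
`sup_{P ∈ [0,1]} min{ (1 − H(ε))·(1 − P), H(ε·(1 − 2P) + P) − H(ε) }`,
strictly exceeds the conventional relaying rate `(1 − H(ε))/2`. -/
theorem capacity_BSC_exceeds_conventional (ε : ℝ) (hε : ε ∈ Set.Ico (0:ℝ) (1/2)) :
    (1 - binH ε) / 2 <
      sSup {r : ℝ | ∃ P ∈ Set.Icc (0:ℝ) 1,
        r = min ((1 - binH ε) * (1 - P)) (binH (ε * (1 - 2 * P) + P) - binH ε)} := by
  have hH : binH ε < 1 := binH_lt_one hε.2.ne
  obtain ⟨P, ⟨hP0, hP⟩, hsecond⟩ :=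
    exists_mem_Ioo_lt_of_continuousAt (f := fun P => binH (ε * (1 - 2 * P) + P) - binH ε)
      (c := (1 - binH ε) / 2)
      (show (0 : ℝ) < 1 / 2 by norm_num) (by fun_prop)
      (by norm_num [binH_half]; linarith)
  have hfirst : (1 - binH ε) / 2 < (1 - binH ε) * (1 - P) := by nlinarith
  refine lt_csSup_of_lt ⟨1 - binH ε, ?_⟩ ⟨P, ⟨hP0.le, by linarith⟩, rfl⟩ (lt_min hfirst hsecond)
  rintro r ⟨Q, ⟨hQ0, -⟩, rfl⟩
  exact (min_le_left _ _).trans (mul_le_of_le_one_right (by linarith) (by linarith))
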